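/- Let f : [a,b] → ℝ be absolutely continuous with f′ ∈ L^∞[a,b]. Then for every x ∈ [a,b], |f(x) − (1/(b−a))∫_a^b f(t) dt| ≤ [1/4 + ((x − (a+b)/2)/(b−a))²](b − a)‖f′‖_{∞,[a,b]}. -/

import Mathlib

open MeasureTheory Set

theorem ostrowski_inequality
    (a b K : ℝ) (f f' : ℝ → ℝ) (hab : a < b)
    (hderiv : ∀ x ∈ Icc a b, HasDerivAt f (f' x) x)
    (hint : IntervalIntegrable f' volume a b)
    (hK : ∀ᵐ t ∂volume, t ∈ Icc a b → |f' t| ≤ K) :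
    ∀ x ∈ Icc a b,
      |f x - (1 / (b - a)) * ∫ t in a..b, f t| ≤
        (1 / 4 + ((x - (a + b) / 2) / (b - a)) ^ 2) * (b - a) * K := by
  -- K is nonnegative
  have hK0 : 0 ≤ K := by
    by_contra h
    push_neg at h
    have hae : ∀ᵐ t ∂volume, t ∉ Icc a b := by
      filter_upwards [hK] with t ht hmem
      exact absurd (ht hmem) (by nlinarith [abs_nonneg (f' t)])
    have h0 : volume {t : ℝ | ¬ t ∉ Icc a b} = 0 := ae_iff.mp hae
    rw [show {t : ℝ | ¬ t ∉ Icc a b} = Icc a b by ext t; simp] at h0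
    rw [Real.volume_Icc, ENNReal.ofReal_eq_zero] at h0
    linarith
  -- Lipschitz bound
  have hLip : ∀ s ∈ Icc a b, ∀ t ∈ Icc a b, |f s - f t| ≤ K * |s - t| := by
    intro s hs t ht
    have hsub' : Set.uIcc t s ⊆ Set.uIcc a b :=
      uIcc_subset_uIcc (by rwa [uIcc_of_le hab.le]) (by rwa [uIcc_of_le hab.le])
    have hsub : Set.uIcc t s ⊆ Icc a b := by rwa [uIcc_of_le hab.le] at hsub' 
    have hftc : ∫ u in t..s, f' u = f s - f t := by
      apply intervalIntegral.integral_eq_sub_of_hasDerivAt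
      · intro u hu
        exact hderiv u (hsub hu)
      · exact hint.mono_set hsub'
    rw [← hftc]
    have hae : ∀ᵐ u, u ∈ Set.uIoc t s → ‖f' u‖ ≤ K := by
      filter_upwards [hK] with u hu hmem
      exact hu (hsub (uIoc_subset_uIcc hmem))
    have := intervalIntegral.norm_integral_le_of_norm_le_const_ae
      (a := t) (b := s) (C := K) (f := f') hae
    simpa [Real.norm_eq_abs, abs_sub_comm, mul_comm] using this
  intro x hx
  obtain ⟨hax, hxb⟩ := hx
  have hba : (0:ℝ) < b - a := by linarith
  -- continuity / integrability of f
  have hcont : ContinuousOn f (Icc a b) := fun t ht => (hderiv t ht).continuousAt.continuousWithinAt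
  have hfi : IntervalIntegrable f volume a b :=
    hcont.intervalIntegrable_of_Icc hab.le
  -- rewrite as average of differences
  have key : f x - (1 / (b - a)) * ∫ t in a..b, f t
      = (1 / (b - a)) * ∫ t in a..b, (f x - f t) := by
    rw [intervalIntegral.integral_sub (intervalIntegrable_const) hfi]
    simp only [intervalIntegral.integral_const, smul_eq_mul]
    field_simp
  rw [key, abs_mul, abs_of_pos (by positivity : (0:ℝ) < 1 / (b - a))]
  -- bound the integral
  have hbound : |∫ t in a..b, (f x - f t)| ≤ ∫ t in a..b, K * |x - t| := by
    calc |∫ t in a..b, (f x - f t)| ≤ ∫ t in a..b, |f x - f t| := by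
          have := intervalIntegral.abs_integral_le_integral_abs
            (f := fun t => f x - f t) (μ := volume) (a := a) (b := b) hab.le
          simpa using this
      _ ≤ ∫ t in a..b, K * |x - t| := by
          apply intervalIntegral.integral_mono_on hab.le
          · exact (intervalIntegrable_const.sub hfi).abs
          · apply ContinuousOn.intervalIntegrable_of_Icc hab.le
            fun_prop
          · intro t ht
            exact hLip x ⟨hax, hxb⟩ t ht
  have hcalc : ∫ t in a..b, K * |x - t| = K * (((x - a)^2 + (b - x)^2) / 2) := by
    rw [intervalIntegral.integral_const_mul]
    congr 1
    have h1 : ∫ t in a..x, |x - t| = (x - a)^2 / 2 := by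
      rw [intervalIntegral.integral_congr (g := fun t => x - t)
        (by intro t ht; rw [uIcc_of_le hax] at ht
            show |x - t| = x - t
            exact abs_of_nonneg (by linarith [ht.2]))]
      rw [intervalIntegral.integral_sub intervalIntegrable_const
        (continuous_id'.intervalIntegrable _ _)]
      simp [integral_id]
      ring
    have h2 : ∫ t in x..b, |x - t| = (b - x)^2 / 2 := by
      rw [intervalIntegral.integral_congr (g := fun t => t - x)
        (by intro t ht; rw [uIcc_of_le hxb] at ht
            show |x - t| = t - x
            rw [abs_of_nonpos (by linarith [ht.1])]; ring)]
      rw [intervalIntegral.integral_sub (continuous_id'.intervalIntegrable _ _)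
        intervalIntegrable_const]
      simp [integral_id]
      ring
    rw [← intervalIntegral.integral_add_adjacent_intervals (b := x)
      (by apply ContinuousOn.intervalIntegrable; fun_prop)
      (by apply ContinuousOn.intervalIntegrable; fun_prop), h1, h2]
    ring
  calc (1 / (b - a)) * |∫ t in a..b, (f x - f t)|
      ≤ (1 / (b - a)) * (K * (((x - a)^2 + (b - x)^2) / 2)) := by
        rw [← hcalc]; exact mul_le_mul_of_nonneg_left hbound (by positivity)
    _ = (1 / 4 + ((x - (a + b) / 2) / (b - a)) ^ 2) * (b - a) * K := by
        field_simp
        ring
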